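/- Let N be a positive integer and φ : ℚ^N → ℚ^N an endomorphism of the discrete group ℚ^N. Then h_A(φ) = sup { H_A(φ, E_m) : m a positive integer }. -/

import Mathlib

open MeasureTheory Filter Pointwise
open scoped ENNReal

noncomputable section

/-- The `n`-th `φ`-trajectory of `C`: `C + φ C + ⋯ + φ^{n-1} C` (pointwise sum of sets). -/
def traj {G : Type*} [AddCommGroup G] (φ : G → G) (C : Set G) (n : ℕ) : Set G :=
  ∑ i ∈ Finset.range n, φ^[i] '' C

/-- The algebraic entropy of `φ` with respect to `C`, computed with the counting measure
(i.e. with cardinalities). -/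
def entHcount {G : Type*} [AddCommGroup G] (φ : G → G) (C : Set G) : EReal :=
  Filter.limsup
    (fun n : ℕ => ENNReal.log ((traj φ C n).encard : ℝ≥0∞) / (n : EReal)) Filter.atTop

/-- The finite subset `E_m = { (c_1,…,c_N) : c_i = j/m, j ∈ ℤ, |j| ≤ m }` of `ℚ^N`. -/
def Em (N m : ℕ) : Set (Fin N → ℚ) :=
  {c | ∀ i, ∃ j : ℤ, |j| ≤ (m : ℤ) ∧ c i = (j : ℚ) / (m : ℚ)}

/-! Every finite `C ⊆ ℚ^N` is carried into some `E_m` by a scaling `x ↦ q • x` with `q ≠ 0`: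
take `m = d K`, where `d` is a common denominator of the coordinates of `C` and `K` bounds
their absolute values, and `q = 1 / K`. Such a scaling is injective and commutes with `φ`, so it
maps trajectories bijectively onto trajectories and preserves `H_A(φ, ·)`; since `H_A(φ, ·)` is
monotone, `H_A(φ, C) ≤ H_A(φ, E_m)`. -/

section Entropy

variable {G G' : Type*} [AddCommGroup G] [AddCommGroup G']

lemma traj_mono (φ : G → G) {C D : Set G} (h : C ⊆ D) (n : ℕ) :
    traj φ C n ⊆ traj φ D n := by
  unfold traj
  induction n with
  | zero => simp
  | succ n ih =>
      rw [Finset.sum_range_succ, Finset.sum_range_succ]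
      exact Set.add_subset_add ih (Set.image_mono h)

lemma entHcount_mono (φ : G → G) {C D : Set G} (h : C ⊆ D) :
    entHcount φ C ≤ entHcount φ D := by
  refine limsup_le_limsup (Eventually.of_forall fun n => ?_)
  refine EReal.div_le_div_right_of_nonneg (by exact_mod_cast Nat.cast_nonneg (α := ℝ) n) ?_
  exact ENNReal.log_monotone (ENat.toENNReal_mono (Set.encard_mono (traj_mono φ h n)))

lemma traj_image (φ : G → G) (ψ : G' → G') (f : G →+ G') (hf : Function.Semiconj f φ ψ)
    (C : Set G) (n : ℕ) : traj ψ (f '' C) n = f '' traj φ C n := by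
  unfold traj
  induction n with
  | zero => simp [← Set.singleton_zero]
  | succ n ih =>
      have hiter : ψ^[n] '' (f '' C) = f '' (φ^[n] '' C) := by
        rw [← Set.image_comp, ← Set.image_comp, (hf.iterate_right n).comp_eq]
      rw [Finset.sum_range_succ, Finset.sum_range_succ, ih, hiter, ← Set.image_add]

lemma entHcount_image (φ : G → G) (ψ : G' → G') (f : G →+ G') (hf : Function.Semiconj f φ ψ)
    (hinj : Function.Injective f) (C : Set G) :
    entHcount ψ (f '' C) = entHcount φ C := by
  unfold entHcount
  congr 1
  funext n
  rw [traj_image φ ψ f hf, hinj.encard_image]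

lemma entHcount_smul [Module ℚ G] (φ : G →+ G) {q : ℚ} (hq : q ≠ 0) (C : Set G) :
    entHcount φ (q • C) = entHcount φ C := by
  rw [← Set.image_smul]
  exact entHcount_image φ φ (DistribSMul.toAddMonoidHom G q)
    (fun x => (map_rat_smul φ q x).symm) (smul_right_injective G hq) C

end Entropy

lemma Set.Finite.exists_pos_nat_mul_eq_intCast {S : Set ℚ} (hS : S.Finite) :
    ∃ d : ℕ, 0 < d ∧ ∀ q ∈ S, ∃ j : ℤ, (d : ℚ) * q = j := by
  refine ⟨∏ q ∈ hS.toFinset, q.den, Finset.prod_pos fun q _ => q.pos, fun q hq => ?_⟩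
  obtain ⟨k, hk⟩ := Finset.dvd_prod_of_mem Rat.den (hS.mem_toFinset.mpr hq)
  refine ⟨k * q.num, ?_⟩
  rw [hk, Int.cast_mul, ← Rat.mul_den_eq_num]
  push_cast
  ring

lemma Em_finite (N m : ℕ) : (Em N m).Finite := by
  have h : Em N m ⊆ (fun j : Fin N → ℤ => fun i => (j i : ℚ) / m) ''
      Set.univ.pi fun _ => Set.Icc (-(m : ℤ)) m := by
    intro c hc
    choose j hj hjc using hc
    exact ⟨j, fun i _ => abs_le.mp (hj i), funext fun i => (hjc i).symm⟩
  exact ((Set.Finite.pi fun _ => Set.finite_Icc _ _).image _).subset h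

lemma zero_mem_Em (N m : ℕ) : (0 : Fin N → ℚ) ∈ Em N m :=
  fun _ => ⟨0, by simp⟩

lemma inv_smul_mem_Em {N d K : ℕ} (hd : 0 < d) (hK : 0 < K) {x : Fin N → ℚ}
    (hint : ∀ i, ∃ j : ℤ, (d : ℚ) * x i = j) (hbound : ∀ i, |x i| ≤ K) :
    (K : ℚ)⁻¹ • x ∈ Em N (d * K) := by
  intro i
  obtain ⟨j, hj⟩ := hint i
  have hdQ : (0 : ℚ) < d := by exact_mod_cast hd
  have hKQ : (0 : ℚ) < K := by exact_mod_cast hK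
  refine ⟨j, ?_, ?_⟩
  · have : |(j : ℚ)| ≤ d * K := by
      rw [← hj, abs_mul, abs_of_pos hdQ]
      exact mul_le_mul_of_nonneg_left (hbound i) hdQ.le
    exact_mod_cast this
  · rw [Pi.smul_apply, smul_eq_mul, ← hj]
    push_cast
    field_simp

lemma exists_smul_subset_Em {N : ℕ} {C : Set (Fin N → ℚ)} (hC : C.Finite) :
    ∃ m, 0 < m ∧ ∃ q : ℚ, q ≠ 0 ∧ q • C ⊆ Em N m := by
  have hcoords : (⋃ c ∈ C, Set.range c).Finite := hC.biUnion fun c _ => Set.finite_range c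
  obtain ⟨d, hd, hint⟩ := hcoords.exists_pos_nat_mul_eq_intCast
  obtain ⟨B, hB⟩ := (hcoords.image abs).exists_le
  obtain ⟨K, hK⟩ := exists_nat_gt (max B 0)
  have hKpos : 0 < K := by exact_mod_cast (le_max_right B 0).trans_lt hK
  refine ⟨d * K, Nat.mul_pos hd hKpos, (K : ℚ)⁻¹, by positivity, ?_⟩
  rintro _ ⟨c, hc, rfl⟩
  have hmem : ∀ i, c i ∈ ⋃ c ∈ C, Set.range c := fun i => Set.mem_biUnion hc ⟨i, rfl⟩
  exact inv_smul_mem_Em hd hKpos (fun i => hint _ (hmem i))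
    (fun i => (hB _ ⟨_, hmem i, rfl⟩).trans ((le_max_left B 0).trans hK.le))

theorem entha_rat_eq_iSup_Em_general
    {N : ℕ} (φ : (Fin N → ℚ) →+ (Fin N → ℚ)) :
    (⨆ (C : Set (Fin N → ℚ)) (_ : C.Finite ∧ (0 : Fin N → ℚ) ∈ C), entHcount (⇑φ) C) =
      ⨆ (m : ℕ) (_ : 0 < m), entHcount (⇑φ) (Em N m) := by
  refine le_antisymm (iSup₂_le fun C ⟨hC, _⟩ => ?_) (iSup₂_le fun m _ => ?_)
  · obtain ⟨m, hm, q, hq, hsub⟩ := exists_smul_subset_Em hC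
    calc entHcount φ C = entHcount φ (q • C) := (entHcount_smul φ hq C).symm
      _ ≤ entHcount φ (Em N m) := entHcount_mono φ hsub
      _ ≤ _ := le_iSup₂_of_le m hm le_rfl
  · exact le_iSup₂_of_le (Em N m) ⟨Em_finite N m, zero_mem_Em N m⟩ le_rfl

/-- **First reduction for the algebraic entropy on `ℚ^N`.**
For every endomorphism `φ` of the discrete group `ℚ^N`,
`h_A(φ) = sup { H_A(φ, E_m) : m ∈ ℕ, m ≥ 1 }`. -/
theorem entha_rat_eq_iSup_Em
    {N : ℕ} (hN : 0 < N) (φ : (Fin N → ℚ) →+ (Fin N → ℚ)) :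
    (⨆ (C : Set (Fin N → ℚ)) (_ : C.Finite ∧ (0 : Fin N → ℚ) ∈ C), entHcount (⇑φ) C) =
      ⨆ (m : ℕ) (_ : 0 < m), entHcount (⇑φ) (Em N m) :=
  entha_rat_eq_iSup_Em_general φ
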